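/- Let f be a proper convex function on ℝ^d and ξ in the relative interior of the effective domain of f. The following are equivalent: (a) ∂f(ξ) is contained in some hyperplane {h : h·ξ = b}; (b) the convex conjugate f* is constant on ∂f(ξ); (c) t ↦ f(tξ) is differentiable at t = 1. -/

import Mathlib

/-!
Fenchel's equality `f*(h) = h·ξ - f(ξ)` for subgradients `h` makes (a) and (b) equivalent.
A subgradient `h` supports `t ↦ f(tξ)` at `t = 1` with slope `h·ξ`, so if that function is
differentiable, `h·ξ` is its derivative. Conversely, the directional derivative
`v ↦ f'(ξ; v)` is finite and sublinear on the direction of the affine span of the domain, so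
by Hahn–Banach both one-sided derivatives `f'(ξ; ξ)` and `-f'(ξ; -ξ)` of `t ↦ f(tξ)` at `1`
are values `h·ξ` of subgradients; if `h·ξ` is constant on `∂f(ξ)` they coincide.
-/

open Set Filter Topology

section LineRestriction

variable {E : Type*} [AddCommGroup E] [Module ℝ E] {f : E → ℝ} {s : Set E} {x v w : E}

noncomputable def dirDeriv (f : E → ℝ) (x v : E) : ℝ :=
  derivWithin (fun t : ℝ => f (x + t • v)) (Ioi 0) 0

theorem ConvexOn.comp_add_smul (hf : ConvexOn ℝ s f) (x v : E) :
    ConvexOn ℝ {t : ℝ | x + t • v ∈ s} (fun t => f (x + t • v)) := by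
  have hline : ⇑(AffineMap.lineMap x (x + v) : ℝ →ᵃ[ℝ] E) = fun t => x + t • v := by
    funext t; rw [AffineMap.lineMap_apply_module]; module
  have h := hf.comp_affineMap (AffineMap.lineMap x (x + v))
  rwa [hline] at h

theorem eventually_add_smul_neg_mem (hv : ∀ᶠ t in 𝓝 (0 : ℝ), x + t • v ∈ s) :
    ∀ᶠ t in 𝓝 (0 : ℝ), x + t • (-v) ∈ s := by
  simpa using (continuous_neg.tendsto' (0 : ℝ) 0 neg_zero).eventually hv

theorem ConvexOn.hasDerivWithinAt_dirDeriv (hf : ConvexOn ℝ s f)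
    (hv : ∀ᶠ t in 𝓝 (0 : ℝ), x + t • v ∈ s) :
    HasDerivWithinAt (fun t : ℝ => f (x + t • v)) (dirDeriv f x v) (Ioi 0) 0 :=
  (hf.comp_add_smul x v).hasDerivWithinAt_rightDeriv_of_mem_interior
    (mem_interior_iff_mem_nhds.2 hv)

theorem ConvexOn.dirDeriv_le_slope (hf : ConvexOn ℝ s f) (hv : ∀ᶠ t in 𝓝 (0 : ℝ), x + t • v ∈ s)
    {t : ℝ} (ht : 0 < t) (hts : x + t • v ∈ s) :
    dirDeriv f x v ≤ (f (x + t • v) - f x) / t := by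
  have := (hf.comp_add_smul x v).rightDeriv_le_slope_of_mem_interior
    (mem_interior_iff_mem_nhds.2 hv) hts ht
  simpa [dirDeriv, slope_def_field] using this

theorem dirDeriv_zero : dirDeriv f x 0 = 0 := by
  simp [dirDeriv]

theorem ConvexOn.dirDeriv_smul (hf : ConvexOn ℝ s f) (hv : ∀ᶠ t in 𝓝 (0 : ℝ), x + t • v ∈ s)
    {c : ℝ} (hc : 0 < c) : dirDeriv f x (c • v) = c * dirDeriv f x v := by
  have hscale : HasDerivWithinAt (fun t : ℝ => c * t) c (Ioi 0) 0 := by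
    simpa using (hasDerivAt_id (0 : ℝ)).const_mul c |>.hasDerivWithinAt
  have hmaps : MapsTo (fun t : ℝ => c * t) (Ioi 0) (Ioi 0) := fun t ht => mul_pos hc ht
  have := (hf.hasDerivWithinAt_dirDeriv hv).comp_of_eq 0 hscale hmaps (mul_zero c).symm
  rw [mul_comm, ← this.derivWithin (uniqueDiffWithinAt_Ioi 0), dirDeriv]
  congr 1
  ext t
  simp [smul_smul, mul_comm]

theorem ConvexOn.tendsto_slope_dirDeriv (hf : ConvexOn ℝ s f)
    (hv : ∀ᶠ t in 𝓝 (0 : ℝ), x + t • v ∈ s) :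
    Tendsto (fun t : ℝ => (f (x + t • v) - f x) / t) (𝓝[>] 0) (𝓝 (dirDeriv f x v)) := by
  have := (hasDerivWithinAt_iff_tendsto_slope' self_notMem_Ioi).1 (hf.hasDerivWithinAt_dirDeriv hv)
  simpa [slope_fun_def_field] using this

theorem ConvexOn.dirDeriv_add_le (hf : ConvexOn ℝ s f)
    (hv : ∀ᶠ t in 𝓝 (0 : ℝ), x + t • v ∈ s) (hw : ∀ᶠ t in 𝓝 (0 : ℝ), x + t • w ∈ s)
    (hvw : ∀ᶠ t in 𝓝 (0 : ℝ), x + t • (v + w) ∈ s) :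
    dirDeriv f x (v + w) ≤ dirDeriv f x v + dirDeriv f x w := by
  refine ge_of_tendsto ((hf.tendsto_slope_dirDeriv hv).add (hf.tendsto_slope_dirDeriv hw)) ?_
  filter_upwards [self_mem_nhdsWithin, nhdsWithin_le_nhds hv, nhdsWithin_le_nhds hw]
    with t (ht : 0 < t) htv htw
  have hmid : x + (t / 2) • (v + w) = (1 / 2 : ℝ) • (x + t • v) + (1 / 2 : ℝ) • (x + t • w) := by
    module
  have hhalf : (0 : ℝ) ≤ 1 / 2 := by norm_num
  have hconv := hf.2 htv htw hhalf hhalf (add_halves 1)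
  rw [← hmid, smul_eq_mul, smul_eq_mul] at hconv
  calc dirDeriv f x (v + w) ≤ (f (x + (t / 2) • (v + w)) - f x) / (t / 2) :=
        hf.dirDeriv_le_slope hvw (by positivity)
          (hmid ▸ hf.1 htv htw hhalf hhalf (add_halves 1))
    _ ≤ (f (x + t • v) - f x) / t + (f (x + t • w) - f x) / t := by
        rw [← add_div, div_le_div_iff₀ (by positivity) ht]
        nlinarith

theorem ConvexOn.neg_dirDeriv_neg_le (hf : ConvexOn ℝ s f)
    (hv : ∀ᶠ t in 𝓝 (0 : ℝ), x + t • v ∈ s) : -dirDeriv f x (-v) ≤ dirDeriv f x v := by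
  have hx : x ∈ s := by simpa using hv.self_of_nhds
  have := hf.dirDeriv_add_le hv (eventually_add_smul_neg_mem hv) (by simp [hx])
  rw [add_neg_cancel, dirDeriv_zero] at this
  linarith

theorem ConvexOn.hasDerivAt_of_dirDeriv_neg_eq (hf : ConvexOn ℝ s f)
    (hv : ∀ᶠ t in 𝓝 (0 : ℝ), x + t • v ∈ s) (h : dirDeriv f x (-v) = -dirDeriv f x v) :
    HasDerivAt (fun t : ℝ => f (x + t • v)) (dirDeriv f x v) 0 := by
  rw [hasDerivAt_iff_tendsto_slope_left_right]
  constructor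
  · have := ((hf.tendsto_slope_dirDeriv (eventually_add_smul_neg_mem hv)).comp
      (tendsto_neg_nhdsLT_neg (a := (0 : ℝ)))).neg
    rw [h, neg_neg, neg_zero] at this
    refine this.congr fun t => ?_
    simp [slope_def_field, div_neg]
  · simpa [slope_fun_def_field] using hf.tendsto_slope_dirDeriv hv

theorem ConvexOn.mul_le_dirDeriv_smul (hf : ConvexOn ℝ s f)
    (hv : ∀ᶠ t in 𝓝 (0 : ℝ), x + t • v ∈ s) {r : ℝ} (h₁ : -dirDeriv f x (-v) ≤ r)
    (h₂ : r ≤ dirDeriv f x v) (c : ℝ) : c * r ≤ dirDeriv f x (c • v) := by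
  rcases lt_trichotomy c 0 with hc | rfl | hc
  · rw [show c • v = (-c) • (-v) by module,
      hf.dirDeriv_smul (eventually_add_smul_neg_mem hv) (neg_pos.2 hc)]
    nlinarith
  · simp [dirDeriv_zero]
  · rw [hf.dirDeriv_smul hv hc]
    nlinarith

theorem hasDerivAt_smul_one_iff {b : ℝ} :
    HasDerivAt (fun t : ℝ => f (t • x)) b 1 ↔ HasDerivAt (fun t : ℝ => f (x + t • x)) b 0 := by
  have hshift : (fun t : ℝ => f (x + t • x)) = fun t => f ((1 + t) • x) := by
    funext t; congr 1; module
  rw [hshift]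
  refine ⟨fun h => HasDerivAt.comp_const_add (1 : ℝ) 0 (by simpa using h), fun h => ?_⟩
  have := HasDerivAt.comp_sub_const (1 : ℝ) 1 (by simpa using h)
  simpa only [add_sub_cancel] using this

end LineRestriction

section Subgradient

variable {E : Type*} [AddCommGroup E] [Module ℝ E] {f : E → ℝ} {s : Set E} {x v w : E}
  {g : Module.Dual ℝ E}

def HasSubgradientWithinAt (f : E → ℝ) (g : Module.Dual ℝ E) (s : Set E) (x : E) : Prop :=
  ∀ y ∈ s, f x + g (y - x) ≤ f y

theorem HasSubgradientWithinAt.sSup_sub_eq (hg : HasSubgradientWithinAt f g s x) (hx : x ∈ s) :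
    sSup {r | ∃ y ∈ s, r = g y - f y} = g x - f x := by
  refine IsGreatest.csSup_eq ⟨⟨x, hx, rfl⟩, ?_⟩
  rintro r ⟨y, hy, rfl⟩
  have := hg y hy
  rw [map_sub] at this
  linarith

theorem HasSubgradientWithinAt.apply_eq_of_hasDerivAt (hg : HasSubgradientWithinAt f g s x)
    (hv : ∀ᶠ t in 𝓝 (0 : ℝ), x + t • v ∈ s) {b : ℝ}
    (hd : HasDerivAt (fun t : ℝ => f (x + t • v)) b 0) : g v = b := by
  have hmin : IsLocalMin (fun t : ℝ => f (x + t • v) - t * g v) 0 := by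
    filter_upwards [hv] with t ht
    have := hg _ ht
    simp only [add_sub_cancel_left, map_smul, smul_eq_mul] at this
    simp only [zero_smul, add_zero, zero_mul, sub_zero]
    linarith
  have := hmin.hasDerivAt_eq_zero (hd.sub ((hasDerivAt_id 0).mul_const (g v)))
  simp only [one_mul] at this
  linarith

theorem ConvexOn.exists_hasSubgradientWithinAt_apply_eq (hf : ConvexOn ℝ s f)
    (hx : ∀ v ∈ (affineSpan ℝ s).direction, ∀ᶠ t in 𝓝 (0 : ℝ), x + t • v ∈ s)
    (hw : w ∈ (affineSpan ℝ s).direction) {r : ℝ}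
    (hr : ∀ c : ℝ, c * r ≤ dirDeriv f x (c • w)) :
    ∃ g : Module.Dual ℝ E, HasSubgradientWithinAt f g s x ∧ g w = r := by
  set V := (affineSpan ℝ s).direction
  have hxs : x ∈ s := by simpa using (hx 0 V.zero_mem).self_of_nhds
  let ℓ : V →ₗ.[ℝ] ℝ := LinearPMap.mkSpanSingleton' (⟨w, hw⟩ : V) r fun (c : ℝ) hc => by
    have hcw : c • w = 0 := by simpa using congrArg Subtype.val hc
    have h₁ := hr c
    have h₂ := hr (-c)
    rw [hcw, dirDeriv_zero] at h₁
    rw [neg_smul, hcw, neg_zero, dirDeriv_zero] at h₂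
    show c * r = 0
    linarith
  obtain ⟨g, hgℓ, hg⟩ := exists_extension_of_le_sublinear ℓ (fun v : V => dirDeriv f x v)
    (fun c hc v => hf.dirDeriv_smul (hx v v.2) hc)
    (fun v w => hf.dirDeriv_add_le (hx v v.2) (hx w w.2) (hx _ (V.add_mem v.2 w.2)))
    (by
      rintro ⟨_, hz⟩
      obtain ⟨c, rfl⟩ := Submodule.mem_span_singleton.1 hz
      rw [LinearPMap.mkSpanSingleton'_apply]
      exact hr c)
  obtain ⟨G, hG⟩ := LinearMap.exists_extend g
  have hGV : ∀ v : V, G v = g v := fun v => congrArg (· v) hG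
  refine ⟨G, fun y hy => ?_, ?_⟩
  · have hyx : y - x ∈ V := AffineSubspace.vsub_mem_direction
      (subset_affineSpan ℝ s hy) (subset_affineSpan ℝ s hxs)
    have := hf.dirDeriv_le_slope (hx _ hyx) one_pos (by simpa using hy)
    rw [one_smul, add_sub_cancel, div_one] at this
    have := hGV ⟨_, hyx⟩ ▸ hg ⟨_, hyx⟩
    linarith
  · rw [hGV ⟨w, hw⟩, hgℓ ⟨_, Submodule.mem_span_singleton_self _⟩]
    exact LinearPMap.mkSpanSingleton'_apply_self _ _ _ _

end Subgradient

section IntrinsicInterior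

variable {E : Type*} [AddCommGroup E] [Module ℝ E] {f : E → ℝ} {s : Set E} {x v : E}

theorem mem_direction_affineSpan_of_eventually_add_smul_mem
    (hv : ∀ᶠ t in 𝓝 (0 : ℝ), x + t • v ∈ s) : v ∈ (affineSpan ℝ s).direction := by
  obtain ⟨t, hts, ht⟩ :=
    ((hv.filter_mono nhdsWithin_le_nhds).and (self_mem_nhdsWithin (s := {0}ᶜ))).exists
  have hx : x ∈ s := by simpa using hv.self_of_nhds
  have := (affineSpan ℝ s).direction.smul_mem t⁻¹ (AffineSubspace.vsub_mem_direction
    (subset_affineSpan ℝ s hts) (subset_affineSpan ℝ s hx))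
  rwa [vsub_eq_sub, add_sub_cancel_left, smul_smul, inv_mul_cancel₀ ht, one_smul] at this

variable [TopologicalSpace E] [ContinuousAdd E] [ContinuousSMul ℝ E]

theorem eventually_add_smul_mem_of_mem_intrinsicInterior (hx : x ∈ intrinsicInterior ℝ s)
    (hv : v ∈ (affineSpan ℝ s).direction) : ∀ᶠ t in 𝓝 (0 : ℝ), x + t • v ∈ s := by
  obtain ⟨y, hy, rfl⟩ := hx
  have hmem : ∀ t : ℝ, (y : E) + t • v ∈ affineSpan ℝ s := fun t => by
    simpa [vadd_eq_add, add_comm] using AffineSubspace.vadd_mem_of_mem_direction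
      ((affineSpan ℝ s).direction.smul_mem t hv) y.2
  have hline : Continuous fun t : ℝ => (⟨y + t • v, hmem t⟩ : affineSpan ℝ s) :=
    (continuous_const.add (continuous_id.smul continuous_const)).subtype_mk hmem
  have := hline.tendsto 0 |>.eventually (isOpen_interior.mem_nhds (by simpa using hy))
  exact this.mono fun t ht => interior_subset (s := Subtype.val ⁻¹' s) ht

end IntrinsicInterior

section Ray

variable {E : Type*} [AddCommGroup E] [Module ℝ E] [TopologicalSpace E] [ContinuousAdd E]
  [ContinuousSMul ℝ E] {f : E → ℝ} {s : Set E} {x v : E}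

theorem ConvexOn.exists_hasDerivAt_add_smul_iff (hf : ConvexOn ℝ s f)
    (hx : x ∈ intrinsicInterior ℝ s) (hv : ∀ᶠ t in 𝓝 (0 : ℝ), x + t • v ∈ s) :
    (∃ b, HasDerivAt (fun t : ℝ => f (x + t • v)) b 0) ↔
      ∃ b, ∀ g, HasSubgradientWithinAt f g s x → g v = b := by
  constructor
  · rintro ⟨b, hb⟩
    exact ⟨b, fun g hg => hg.apply_eq_of_hasDerivAt hv hb⟩
  · rintro ⟨b, hb⟩
    have hx' : ∀ w ∈ (affineSpan ℝ s).direction, ∀ᶠ t in 𝓝 (0 : ℝ), x + t • w ∈ s :=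
      fun w hw => eventually_add_smul_mem_of_mem_intrinsicInterior hx hw
    have hvV := mem_direction_affineSpan_of_eventually_add_smul_mem hv
    have hmin := hf.neg_dirDeriv_neg_le hv
    obtain ⟨gR, hgR, hgRv⟩ := hf.exists_hasSubgradientWithinAt_apply_eq hx' hvV
      (hf.mul_le_dirDeriv_smul hv hmin le_rfl)
    obtain ⟨gL, hgL, hgLv⟩ := hf.exists_hasSubgradientWithinAt_apply_eq hx' hvV
      (hf.mul_le_dirDeriv_smul hv le_rfl hmin)
    have hopp : dirDeriv f x (-v) = -dirDeriv f x v := by linarith [hb gR hgR, hb gL hgL]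
    exact ⟨_, hf.hasDerivAt_of_dirDeriv_neg_eq hv hopp⟩

theorem ConvexOn.tfae_hasDerivWithinAt_smul (hf : ConvexOn ℝ s f)
    (hx : x ∈ intrinsicInterior ℝ s) (hseg : {t : ℝ | t • x ∈ s} ∈ 𝓝 1) :
    [∃ b, ∀ g, HasSubgradientWithinAt f g s x → g x = b,
     ∃ c, ∀ g, HasSubgradientWithinAt f g s x → sSup {r | ∃ y ∈ s, r = g y - f y} = c,
     ∃ b, HasDerivWithinAt (fun t : ℝ => f (t • x)) b {t | t • x ∈ s} 1].TFAE := by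
  have hxs : x ∈ s := intrinsicInterior_subset hx
  have hray : ∀ᶠ t in 𝓝 (0 : ℝ), x + t • x ∈ s := by
    have := ((continuous_const_add (1 : ℝ)).tendsto' 0 1 (add_zero 1)).eventually hseg
    simpa [add_smul] using this
  tfae_have 1 → 2
  | ⟨b, hb⟩ => ⟨b - f x, fun g hg => by rw [hg.sSup_sub_eq hxs, hb g hg]⟩
  tfae_have 2 → 1
  | ⟨c, hc⟩ => ⟨c + f x, fun g hg => by linarith [hc g hg, hg.sSup_sub_eq hxs]⟩
  tfae_have 1 ↔ 3 := by
    rw [← hf.exists_hasDerivAt_add_smul_iff hx hray]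
    refine exists_congr fun b => ?_
    rw [← hasDerivAt_smul_one_iff]
    exact ⟨HasDerivAt.hasDerivWithinAt, fun h => h.hasDerivAt hseg⟩
  tfae_finish

end Ray

/-- For `f` convex on `s ⊆ ℝ^d` and `ξ` in the relative (intrinsic) interior of `s`
(with the segment condition making `t ↦ f(tξ)` defined near `t = 1`), the following
are equivalent: (a) `∂f(ξ)` lies in a hyperplane `{h : h·ξ = b}`; (b) the convex
conjugate `f*` is constant on `∂f(ξ)`; (c) `t ↦ f(tξ)` is differentiable at `t = 1`. -/
theorem stmt5 (d : ℕ) (f : (Fin d → ℝ) → ℝ) (s : Set (Fin d → ℝ))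
    (hconv : ConvexOn ℝ s f) (ξ : Fin d → ℝ) (hξ : ξ ∈ intrinsicInterior ℝ s)
    (hseg : {t : ℝ | t • ξ ∈ s} ∈ nhds (1 : ℝ)) :
    ((∃ b : ℝ, ∀ h : Fin d → ℝ,
        (∀ ζ ∈ s, f ξ + (∑ i, h i * (ζ i - ξ i)) ≤ f ζ) → (∑ i, h i * ξ i) = b)
      ↔ (∃ c : ℝ, ∀ h : Fin d → ℝ,
        (∀ ζ ∈ s, f ξ + (∑ i, h i * (ζ i - ξ i)) ≤ f ζ) →
          sSup {y : ℝ | ∃ ζ ∈ s, y = (∑ i, h i * ζ i) - f ζ} = c))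
    ∧ ((∃ c : ℝ, ∀ h : Fin d → ℝ,
        (∀ ζ ∈ s, f ξ + (∑ i, h i * (ζ i - ξ i)) ≤ f ζ) →
          sSup {y : ℝ | ∃ ζ ∈ s, y = (∑ i, h i * ζ i) - f ζ} = c)
      ↔ (∃ b : ℝ, HasDerivWithinAt (fun t : ℝ => f (t • ξ)) b {t : ℝ | t • ξ ∈ s} 1)) := by
  have hdual : ∀ P : Module.Dual ℝ (Fin d → ℝ) → Prop,
      (∀ g, P g) ↔ ∀ h, P (dotProductEquiv ℝ (Fin d) h) :=
    fun P => (dotProductEquiv ℝ (Fin d)).toEquiv.forall_congr_right.symm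
  have key := hconv.tfae_hasDerivWithinAt_smul hξ hseg
  simp only [hdual] at key
  -- `dotProductEquiv ℝ (Fin d) h v` unfolds to `∑ i, h i * v i`, so `key` is the claim
  exact ⟨key.out 0 1, key.out 1 2⟩
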